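/- For σ, ρ ∈ S_m and σ', ρ' ∈ S_n, the union over all γ ∈ [σ,ρ]_L and γ' ∈ [σ',ρ']_L of the sets of (m,n)-shuffles of γ and γ' equals the left weak Bruhat interval [σ*σ', ρ⊛ρ']_L in S_{m+n}. -/

import Mathlib

open scoped Classical

noncomputable section

/-- The symmetric group `S_{n+1}` (the paper's `S_n` with `n = n+1`). -/
abbrev SG (n : ℕ) := Equiv.Perm (Fin (n + 1))

/-- The simple transposition `s_{i+1}` (adjacent transposition swapping `i` and `i+1`,
0-indexed). -/
def sgen {n : ℕ} (i : Fin n) : SG n := Equiv.swap i.castSucc i.succ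

/-- Coxeter length of a permutation, i.e. its number of inversions. -/
def len {n : ℕ} (σ : SG n) : ℕ :=
  (Finset.univ.filter fun p : Fin (n + 1) × Fin (n + 1) => p.1 < p.2 ∧ σ p.2 < σ p.1).card

/-- The left weak Bruhat order on `S_{n+1}`. -/
def leL {n : ℕ} (σ ρ : SG n) : Prop := ∃ γ, ρ = γ * σ ∧ len ρ = len σ + len γ

/-- Left descent set. -/
def DesL {n : ℕ} (σ : SG n) : Set (Fin n) := {i | len (sgen i * σ) < len σ}

/-- Right descent set. -/
def DesR {n : ℕ} (σ : SG n) : Set (Fin n) := {i | len (σ * sgen i) < len σ}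

/-- The longest element `w₀` of `S_{n+1}`. -/
def w0 {n : ℕ} : SG n := ⟨Fin.rev, Fin.rev, Fin.rev_rev, Fin.rev_rev⟩

lemma len_one {n : ℕ} : len (1 : SG n) = 0 := by
  unfold len
  rw [Finset.card_eq_zero, Finset.eq_empty_iff_forall_notMem]
  rintro p hp
  rw [Finset.mem_filter] at hp
  obtain ⟨-, h1, h2⟩ := hp
  simp only [Equiv.Perm.one_apply] at h2
  exact absurd (h1.trans h2) (lt_irrefl _)

lemma leL_refl {n : ℕ} (σ : SG n) : leL σ σ :=
  ⟨1, (one_mul σ).symm, by simp [len_one]⟩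

/-- The defining relations of the 0-Hecke algebra `H_{n+1}(0)`. -/
inductive HRel (n : ℕ) : FreeAlgebra ℂ (Fin n) → FreeAlgebra ℂ (Fin n) → Prop
  | idem (i : Fin n) :
      HRel n (FreeAlgebra.ι ℂ i * FreeAlgebra.ι ℂ i) (FreeAlgebra.ι ℂ i)
  | braid (i j : Fin n) (h : (i : ℕ) + 1 = j) :
      HRel n (FreeAlgebra.ι ℂ i * FreeAlgebra.ι ℂ j * FreeAlgebra.ι ℂ i)
             (FreeAlgebra.ι ℂ j * FreeAlgebra.ι ℂ i * FreeAlgebra.ι ℂ j)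
  | comm (i j : Fin n) (h : (i : ℕ) + 2 ≤ j) :
      HRel n (FreeAlgebra.ι ℂ i * FreeAlgebra.ι ℂ j) (FreeAlgebra.ι ℂ j * FreeAlgebra.ι ℂ i)

/-- The 0-Hecke algebra `H_{n+1}(0)` over `ℂ`. -/
abbrev Hecke (n : ℕ) := RingQuot (HRel n)

/-- The generator `π_{i+1}` of the 0-Hecke algebra. -/
def hpi {n : ℕ} (i : Fin n) : Hecke n :=
  RingQuot.mkAlgHom ℂ (HRel n) (FreeAlgebra.ι ℂ i)

/-- The element `π̄_{i+1} = π_{i+1} - 1`. -/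
def hpibar {n : ℕ} (i : Fin n) : Hecke n := hpi i - 1

/-- `l` is a reduced word for `σ`. -/
def IsReducedWord {n : ℕ} (l : List (Fin n)) (σ : SG n) : Prop :=
  (l.map sgen).prod = σ ∧ l.length = len σ

/-- `π_σ`, the product of the generators `π_i` along a reduced word for `σ`. -/
noncomputable def piPerm {n : ℕ} (σ : SG n) : Hecke n :=
  if h : ∃ l : List (Fin n), IsReducedWord l σ then ((h.choose.map hpi).prod) else 0

/-- `π̄_σ`, the product of the elements `π̄_i` along a reduced word for `σ`. -/
noncomputable def pibarPerm {n : ℕ} (σ : SG n) : Hecke n :=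
  if h : ∃ l : List (Fin n), IsReducedWord l σ then ((h.choose.map hpibar).prod) else 0

/-- The left weak Bruhat interval `[σ,ρ]_L`. -/
abbrev Itv {n : ℕ} (σ ρ : SG n) := {γ : SG n // leL σ γ ∧ leL γ ρ}

/-- The action of the generator `π_{i+1}` on a basis element of `ℂ[σ,ρ]_L`. -/
noncomputable def bpiFun {n : ℕ} (σ ρ : SG n) (i : Fin n) (γ : Itv σ ρ) :
    Itv σ ρ →₀ ℂ :=
  if i ∈ DesL γ.1 then Finsupp.single γ 1
  else if h : leL σ (sgen i * γ.1) ∧ leL (sgen i * γ.1) ρ then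
    Finsupp.single ⟨sgen i * γ.1, h⟩ 1
  else 0

/-- The operator `𝛑_i` on `ℂ[σ,ρ]_L` (the action of `π_{i+1}` on `B(σ,ρ)`). -/
noncomputable def bpi {n : ℕ} (σ ρ : SG n) (i : Fin n) :
    (Itv σ ρ →₀ ℂ) →ₗ[ℂ] (Itv σ ρ →₀ ℂ) :=
  Finsupp.lift _ ℂ _ (bpiFun σ ρ i)

/-- The action of `π̄_{i+1}` on a basis element of the module `B̄(σ,ρ)`. -/
noncomputable def bbarFun {n : ℕ} (σ ρ : SG n) (i : Fin n) (γ : Itv σ ρ) :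
    Itv σ ρ →₀ ℂ :=
  if i ∈ DesL γ.1 then -Finsupp.single γ 1
  else if h : leL σ (sgen i * γ.1) ∧ leL (sgen i * γ.1) ρ then
    Finsupp.single ⟨sgen i * γ.1, h⟩ 1
  else 0

/-- The operator giving the action of `π̄_{i+1}` on `B̄(σ,ρ)`. -/
noncomputable def bbar {n : ℕ} (σ ρ : SG n) (i : Fin n) :
    (Itv σ ρ →₀ ℂ) →ₗ[ℂ] (Itv σ ρ →₀ ℂ) :=
  Finsupp.lift _ ℂ _ (bbarFun σ ρ i)

/-- Standardization of an injective tuple in a linear order: the permutation recording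
relative ranks. -/
noncomputable def std {k : ℕ} {α : Type*} [Fintype α] [LinearOrder α]
    (f : Fin k → α) (hf : Function.Injective f) : Equiv.Perm (Fin k) :=
  (Equiv.ofInjective f hf).trans
    ((Equiv.subtypeEquivRight (fun x => by simp)).trans
      ((Finset.univ.image f).orderIsoOfFin
        (by rw [Finset.card_image_of_injective _ hf, Finset.card_univ,
          Fintype.card_fin])).symm.toEquiv)

/-- `st(γ; [1, m+1])`, the standardization of `γ` on the first `m+1` positions. -/
noncomputable def stL {m n : ℕ} (γ : SG (m + n + 1)) : SG m :=
  std (fun i : Fin (m + 1) => γ ⟨(i : ℕ), by have := i.isLt; omega⟩)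
    (by
      intro a b hab
      have h1 := γ.injective hab
      simp only [Fin.mk.injEq] at h1
      exact Fin.ext h1)

/-- `st(γ; [m+2, m+n+2])`, the standardization of `γ` on the last `n+1` positions. -/
noncomputable def stR {m n : ℕ} (γ : SG (m + n + 1)) : SG n :=
  std (fun j : Fin (n + 1) => γ ⟨m + 1 + (j : ℕ), by have := j.isLt; omega⟩)
    (by
      intro a b hab
      have h1 := γ.injective hab
      simp only [Fin.mk.injEq] at h1
      exact Fin.ext (by omega))

/-- `σ * τ`, the "concatenation" permutation in `S_{(m+1)+(n+1)}`. -/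
def ast {m n : ℕ} (σ : SG m) (τ : SG n) : SG (m + n + 1) :=
  (finCongr (by omega : (m + 1) + (n + 1) = m + n + 2)).permCongr
    (finSumFinEquiv.permCongr (Equiv.sumCongr σ τ))

/-- The longest element `δ_max` of `R_{m+1,n+1}`. -/
def deltaMax (m n : ℕ) : SG (m + n + 1) :=
  (finCongr (by omega : m + n + 2 = (m + 1) + (n + 1))).trans
    (finSumFinEquiv.symm.trans
      ((Equiv.sumComm (Fin (m + 1)) (Fin (n + 1))).trans
        (finSumFinEquiv.trans (finCongr (by omega : (n + 1) + (m + 1) = m + n + 2)))))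

/-- `σ ⊛ τ`, the "shifted concatenation" permutation: `(σ⊛τ)(i) = σ(i)+n` on the first block
and `(σ⊛τ)(m+j) = τ(j)` on the second. -/
def ostar {m n : ℕ} (σ : SG m) (τ : SG n) : SG (m + n + 1) :=
  deltaMax m n * ast σ τ

/-- The set `R_{m+1,n+1}` of permutations increasing on the first `m+1` and on the last `n+1`
positions (the minimal length coset representatives). -/
def Rmn (m n : ℕ) : Set (SG (m + n + 1)) :=
  {δ | (∀ i j : Fin (m + n + 2), i < j → (j : ℕ) < m + 1 → δ i < δ j) ∧
       (∀ i j : Fin (m + n + 2), m + 1 ≤ (i : ℕ) → i < j → δ i < δ j)}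

/-! The left weak order is containment of inversion sets (inversions being pairs of positions).
`σ * σ'` has exactly the inversions of `σ` inside the first block and of `σ'` inside the second,
`ρ ⊛ ρ'` has those of `ρ` and `ρ'` together with every pair straddling the two blocks, and the
inversions of `ξ` inside the blocks are those of `stL ξ` and `stR ξ`. Hence
`σ * σ' ≤ ξ ≤ ρ ⊛ ρ'` splits into `σ ≤ stL ξ ≤ ρ` and `σ' ≤ stR ξ ≤ ρ'`. -/

section Inversions

variable {α : Type*} [Fintype α] [LinearOrder α]

def inversions (σ : Equiv.Perm α) : Finset (α × α) :=
  Finset.univ.filter fun p => p.1 < p.2 ∧ σ p.2 < σ p.1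

lemma mem_inversions {σ : Equiv.Perm α} {p : α × α} :
    p ∈ inversions σ ↔ p.1 < p.2 ∧ σ p.2 < σ p.1 := by
  simp [inversions]

lemma len_eq_card_inversions {k : ℕ} (σ : SG k) : len σ = (inversions σ).card := rfl

lemma card_inversions_mul_inv (σ ρ : Equiv.Perm α) :
    (inversions (ρ * σ⁻¹)).card =
      (inversions ρ \ inversions σ).card + (inversions σ \ inversions ρ).card := by
  -- relabelled through `σ`, the inversions of `ρ * σ⁻¹` are the pairs that `σ` and `ρ` order
  -- oppositely
  set D := Finset.univ.filter fun p : α × α => σ p.1 < σ p.2 ∧ ρ p.2 < ρ p.1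
  have hD : (inversions (ρ * σ⁻¹)).card = D.card := by
    refine Finset.card_nbij' (fun p => (σ⁻¹ p.1, σ⁻¹ p.2)) (fun p => (σ p.1, σ p.2))
      ?_ ?_ ?_ ?_ <;> intro p <;> simp [D, mem_inversions]
  have hlt : (D.filter fun p => p.1 < p.2) = inversions ρ \ inversions σ := by
    ext ⟨x, y⟩
    simp only [D, Finset.mem_filter, Finset.mem_sdiff, mem_inversions, Finset.mem_univ, true_and]
    constructor
    · rintro ⟨⟨hσ, hρ⟩, hxy⟩
      exact ⟨⟨hxy, hρ⟩, fun h => hσ.asymm h.2⟩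
    · rintro ⟨⟨hxy, hρ⟩, hσ⟩
      have hne : σ x ≠ σ y := σ.injective.ne hxy.ne
      exact ⟨⟨lt_of_le_of_ne (not_lt.1 fun h => hσ ⟨hxy, h⟩) hne, hρ⟩, hxy⟩
  have hgt : (D.filter fun p => ¬ p.1 < p.2).card = (inversions σ \ inversions ρ).card := by
    refine Finset.card_nbij' Prod.swap Prod.swap ?_ ?_ (fun _ _ => rfl) (fun _ _ => rfl)
    all_goals
      rintro ⟨x, y⟩
      simp only [Finset.mem_coe, D, Finset.mem_filter, Finset.mem_sdiff, Finset.mem_univ,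
        true_and, mem_inversions, Prod.swap_prod_mk]
    · rintro ⟨⟨hσ, hρ⟩, hxy⟩
      have hne : y ≠ x := fun h => by simp [h] at hσ
      exact ⟨⟨lt_of_le_of_ne (not_lt.1 hxy) hne, hσ⟩, fun h => hρ.asymm h.2⟩
    · rintro ⟨⟨hxy, hσ⟩, hρ⟩
      have hne : ρ x ≠ ρ y := ρ.injective.ne hxy.ne
      exact ⟨⟨hσ, lt_of_le_of_ne (not_lt.1 fun h => hρ ⟨hxy, h⟩) hne⟩, hxy.asymm⟩
  rw [hD, ← Finset.card_filter_add_card_filter_not (fun p : α × α => p.1 < p.2), hlt, hgt]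

end Inversions

lemma leL_iff_inversions_subset {k : ℕ} (σ ρ : SG k) :
    leL σ ρ ↔ inversions σ ⊆ inversions ρ := by
  have hleL : leL σ ρ ↔ len ρ = len σ + len (ρ * σ⁻¹) :=
    ⟨fun ⟨γ, hρ, hlen⟩ => by rwa [hρ, mul_inv_cancel_right, ← hρ],
      fun h => ⟨ρ * σ⁻¹, (inv_mul_cancel_right ρ σ).symm, h⟩⟩
  have hρ := Finset.card_sdiff_add_card_inter (inversions ρ) (inversions σ)
  have hσ := Finset.card_sdiff_add_card_inter (inversions σ) (inversions ρ)
  rw [Finset.inter_comm] at hσ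
  rw [hleL, len_eq_card_inversions, len_eq_card_inversions, len_eq_card_inversions,
    card_inversions_mul_inv, ← Finset.sdiff_eq_empty_iff_subset, ← Finset.card_eq_zero]
  omega

lemma leL_iff_forall_inversion {k : ℕ} (σ ρ : SG k) :
    leL σ ρ ↔ ∀ i j : Fin (k + 1), i < j → σ j < σ i → ρ j < ρ i := by
  simp only [leL_iff_inversions_subset, Finset.subset_iff, Prod.forall, mem_inversions]
  exact forall₂_congr fun i j =>
    ⟨fun h hij hσ => (h ⟨hij, hσ⟩).2, fun h hσ => ⟨hσ.1, h hσ.1 hσ.2⟩⟩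

lemma std_lt_iff {k : ℕ} {α : Type*} [Fintype α] [LinearOrder α]
    (f : Fin k → α) (hf : Function.Injective f) (i j : Fin k) :
    std f hf i < std f hf j ↔ f i < f j := by
  simp only [std, Equiv.trans_apply, Equiv.ofInjective_apply, Equiv.subtypeEquivRight_apply,
    RelIso.coe_fn_toEquiv, OrderIso.lt_iff_lt]
  exact Subtype.mk_lt_mk

section Blocks

variable {m n : ℕ}

def posL (a : Fin (m + 1)) : Fin (m + n + 2) := ⟨a, by omega⟩

def posR (b : Fin (n + 1)) : Fin (m + n + 2) := ⟨m + 1 + b, by omega⟩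

lemma forall_posL_posR {P : Fin (m + n + 2) → Prop} :
    (∀ x, P x) ↔ (∀ a, P (posL a)) ∧ ∀ b, P (posR b) := by
  refine ⟨fun h => ⟨fun a => h _, fun b => h _⟩, fun ⟨hL, hR⟩ x => ?_⟩
  rcases lt_or_ge (x : ℕ) (m + 1) with hx | hx
  · exact hL ⟨x, hx⟩
  · simpa [posR, Nat.add_sub_cancel' hx] using hR ⟨x - (m + 1), by omega⟩

@[simp] lemma posL_lt_posL {a b : Fin (m + 1)} : (posL a : Fin (m + n + 2)) < posL b ↔ a < b :=
  Iff.rfl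

@[simp] lemma posR_lt_posR {a b : Fin (n + 1)} : (posR a : Fin (m + n + 2)) < posR b ↔ a < b := by
  simp only [posR, Fin.lt_def]
  omega

@[simp] lemma posL_lt_posR (a : Fin (m + 1)) (b : Fin (n + 1)) :
    (posL a : Fin (m + n + 2)) < posR b := by
  simp only [posL, posR, Fin.lt_def]; omega

@[simp] lemma not_posR_lt_posL (a : Fin (n + 1)) (b : Fin (m + 1)) :
    ¬ (posR a : Fin (m + n + 2)) < posL b := by
  simp only [posL, posR, Fin.lt_def]; omega

lemma stL_lt_iff (ξ : SG (m + n + 1)) (a b : Fin (m + 1)) :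
    stL ξ a < stL ξ b ↔ ξ (posL a) < ξ (posL b) :=
  std_lt_iff _ _ a b

lemma stR_lt_iff (ξ : SG (m + n + 1)) (a b : Fin (n + 1)) :
    stR ξ a < stR ξ b ↔ ξ (posR a) < ξ (posR b) :=
  std_lt_iff _ _ a b

@[simp] lemma ast_posL (σ : SG m) (τ : SG n) (a : Fin (m + 1)) :
    ast σ τ (posL a) = posL (σ a) := by
  have hx : finCongr (by omega : m + n + 2 = (m + 1) + (n + 1)) (posL a) = Fin.castAdd (n + 1) a :=
    Fin.ext rfl
  ext
  simp only [ast, Equiv.permCongr_apply, finCongr_symm, hx, finSumFinEquiv_symm_apply_castAdd,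
    Equiv.sumCongr_apply, Sum.map_inl, finSumFinEquiv_apply_left, finCongr_apply, Fin.val_cast,
    Fin.val_castAdd]
  rfl

@[simp] lemma ast_posR (σ : SG m) (τ : SG n) (b : Fin (n + 1)) :
    ast σ τ (posR b) = posR (τ b) := by
  have hx : finCongr (by omega : m + n + 2 = (m + 1) + (n + 1)) (posR b) = Fin.natAdd (m + 1) b :=
    Fin.ext rfl
  ext
  simp only [ast, Equiv.permCongr_apply, finCongr_symm, hx, finSumFinEquiv_symm_apply_natAdd,
    Equiv.sumCongr_apply, Sum.map_inr, finSumFinEquiv_apply_right, finCongr_apply, Fin.val_cast,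
    Fin.val_natAdd]
  rfl

lemma deltaMax_posL (a : Fin (m + 1)) : (deltaMax m n (posL a) : ℕ) = n + 1 + a := by
  have hx : finCongr (by omega : m + n + 2 = (m + 1) + (n + 1)) (posL a) = Fin.castAdd (n + 1) a :=
    Fin.ext rfl
  simp [deltaMax, hx]

lemma deltaMax_posR (b : Fin (n + 1)) : (deltaMax m n (posR b) : ℕ) = b := by
  have hx : finCongr (by omega : m + n + 2 = (m + 1) + (n + 1)) (posR b) = Fin.natAdd (m + 1) b :=
    Fin.ext rfl
  simp [deltaMax, hx]

@[simp] lemma ostar_posL_lt_ostar_posL (σ : SG m) (τ : SG n) (a b : Fin (m + 1)) :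
    ostar σ τ (posL a) < ostar σ τ (posL b) ↔ σ a < σ b := by
  simp only [ostar, Equiv.Perm.mul_apply, ast_posL, Fin.lt_def, deltaMax_posL]
  omega

@[simp] lemma ostar_posR_lt_ostar_posR (σ : SG m) (τ : SG n) (a b : Fin (n + 1)) :
    ostar σ τ (posR a) < ostar σ τ (posR b) ↔ τ a < τ b := by
  simp only [ostar, Equiv.Perm.mul_apply, ast_posR, Fin.lt_def, deltaMax_posR]

@[simp] lemma ostar_posR_lt_ostar_posL (σ : SG m) (τ : SG n) (a : Fin (n + 1))
    (b : Fin (m + 1)) :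
    ostar σ τ (posR a) < ostar σ τ (posL b) := by
  simp only [ostar, Fin.lt_def, Equiv.Perm.mul_apply, ast_posL, ast_posR, deltaMax_posL,
    deltaMax_posR]
  omega

lemma leL_ast_iff (σ : SG m) (σ' : SG n) (ξ : SG (m + n + 1)) :
    leL (ast σ σ') ξ ↔ leL σ (stL ξ) ∧ leL σ' (stR ξ) := by
  simp [leL_iff_forall_inversion, forall_posL_posR, stL_lt_iff, stR_lt_iff]

lemma leL_ostar_iff (ρ : SG m) (ρ' : SG n) (ξ : SG (m + n + 1)) :
    leL ξ (ostar ρ ρ') ↔ leL (stL ξ) ρ ∧ leL (stR ξ) ρ' := by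
  simp [leL_iff_forall_inversion, forall_posL_posR, stL_lt_iff, stR_lt_iff]

end Blocks

/-- `[σ,ρ]_L ⧢ [σ',ρ']_L = [σ*σ', ρ⊛ρ']_L`: a permutation `ξ` is an `(m,n)`-shuffle of some
`γ ∈ [σ,ρ]_L` and some `γ' ∈ [σ',ρ']_L` iff `ξ` lies in the left weak Bruhat interval
`[σ*σ', ρ⊛ρ']_L`. -/
theorem stmt11 (m n : ℕ) (σ ρ : SG m) (σ' ρ' : SG n) (ξ : SG (m + n + 1)) :
    (∃ γ γ', (leL σ γ ∧ leL γ ρ) ∧ (leL σ' γ' ∧ leL γ' ρ') ∧ stL ξ = γ ∧ stR ξ = γ') ↔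
      (leL (ast σ σ') ξ ∧ leL ξ (ostar ρ ρ')) := by
  rw [leL_ast_iff, leL_ostar_iff]
  constructor
  · rintro ⟨_, _, ⟨hσ, hρ⟩, ⟨hσ', hρ'⟩, rfl, rfl⟩
    exact ⟨⟨hσ, hσ'⟩, hρ, hρ'⟩
  · rintro ⟨⟨hσ, hσ'⟩, hρ, hρ'⟩
    exact ⟨_, _, ⟨hσ, hρ⟩, ⟨hσ', hρ'⟩, rfl, rfl⟩

end
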